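/- arXiv:1810.07299 — 5 statements merged into one kernel-verified Lean document; each statement's English description precedes it below -/
import Mathlib

section
/- Let n ≥ 2 and let ζ be a primitive n-th root of unity in ℂ. Then the sum over i from 1 to n−1 of 1/((1 − ζ^i)(1 − ζ^{−i})) equals (n² − 1)/12. -/
/-!
For a nontrivial `n`-th root of unity `w`, summation by parts on the geometric series gives
`∑_{k<n} k w^k = n / (w - 1)`, hence `1 / ((1 - w)(1 - w⁻¹)) = n⁻² ∑_{j,k<n} j k w^(j-k)`.
Summing over `w = ζ^i` and using orthogonality, `∑_{i=1}^{n-1} ζ^(i(j-k)) = n [j = k] - 1`,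
leaves `(n ∑ k² - (∑ k)²) / n² = (n² - 1) / 12`.
-/

open Finset

section CommRing

variable {R : Type*} [CommRing R]

theorem two_mul_sum_range_natCast (n : ℕ) :
    2 * ∑ k ∈ range n, (k : R) = n * (n - 1) := by
  induction n with
  | zero => simp
  | succ n ih => rw [sum_range_succ, mul_add, ih]; push_cast; ring

theorem six_mul_sum_range_natCast_sq (n : ℕ) :
    6 * ∑ k ∈ range n, (k : R) ^ 2 = n * (n - 1) * (2 * n - 1) := by
  induction n with
  | zero => simp
  | succ n ih => rw [sum_range_succ, mul_add, ih]; push_cast; ring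

theorem mul_sub_one_mul_sum_range_natCast_mul_pow (w : R) (n : ℕ) :
    (w - 1) * ∑ k ∈ range n, (k : R) * w ^ k = n * w ^ n - w * ∑ k ∈ range n, w ^ k := by
  induction n with
  | zero => simp
  | succ n ih => rw [sum_range_succ, sum_range_succ, mul_add, ih]; push_cast; ring

end CommRing

section Field

variable {K : Type*} [Field K]

theorem sum_range_natCast_mul_pow_of_pow_eq_one {w : K} {n : ℕ} (hwn : w ^ n = 1) (hw1 : w ≠ 1) :
    ∑ k ∈ range n, (k : K) * w ^ k = n / (w - 1) := by
  have hgeom : ∑ k ∈ range n, w ^ k = 0 := by rw [geom_sum_eq hw1, hwn, sub_self, zero_div]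
  have key := mul_sub_one_mul_sum_range_natCast_mul_pow w n
  rw [hwn, hgeom, mul_zero, sub_zero, mul_one] at key
  rw [eq_div_iff (sub_ne_zero.mpr hw1), mul_comm, key]

theorem one_div_one_sub_eq_sum_range_of_pow_eq_one {w : K} {n : ℕ} (hn : (n : K) ≠ 0)
    (hwn : w ^ n = 1) (hw1 : w ≠ 1) :
    1 / (1 - w) = -(∑ k ∈ range n, (k : K) * w ^ k) / n := by
  have hw1' : w - 1 ≠ 0 := sub_ne_zero.mpr hw1
  rw [sum_range_natCast_mul_pow_of_pow_eq_one hwn hw1]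
  field_simp
  ring

theorem one_div_one_sub_mul_one_sub_inv_eq_sum {w : K} {n : ℕ} (hn : (n : K) ≠ 0)
    (hwn : w ^ n = 1) (hw1 : w ≠ 1) :
    1 / ((1 - w) * (1 - w⁻¹)) =
      (∑ j ∈ range n, ∑ k ∈ range n, (j : K) * k * (w ^ j * (w ^ k)⁻¹)) / n ^ 2 := by
  have hinv : w⁻¹ ^ n = 1 := by rw [inv_pow, hwn, inv_one]
  have hinv1 : w⁻¹ ≠ 1 := inv_ne_one.mpr hw1
  calc 1 / ((1 - w) * (1 - w⁻¹)) = 1 / (1 - w) * (1 / (1 - w⁻¹)) := by rw [one_div_mul_one_div]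
    _ = (∑ j ∈ range n, (j : K) * w ^ j) * (∑ k ∈ range n, (k : K) * w⁻¹ ^ k) / n ^ 2 := by
      rw [one_div_one_sub_eq_sum_range_of_pow_eq_one hn hwn hw1,
        one_div_one_sub_eq_sum_range_of_pow_eq_one hn hinv hinv1]
      ring
    _ = _ := by
      rw [sum_mul_sum]
      simp_rw [inv_pow]
      congr! 3 with j _ k _
      ring

theorem IsPrimitiveRoot.sum_Icc_pow_mul_inv_pow {ζ : K} {n : ℕ} (hζ : IsPrimitiveRoot ζ n)
    {j k : ℕ} (hj : j < n) (hk : k < n) :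
    ∑ i ∈ Icc 1 (n - 1), (ζ ^ j * (ζ ^ k)⁻¹) ^ i = (if j = k then (n : K) else 0) - 1 := by
  have hn : 0 < n := by omega
  have hζk : ζ ^ k ≠ 0 := pow_ne_zero _ (hζ.ne_zero hn.ne')
  have hIcc : Icc 1 (n - 1) = Ico 1 n := by ext; simp only [mem_Icc, mem_Ico]; omega
  split_ifs with hjk
  · subst hjk
    rw [mul_inv_cancel₀ hζk, hIcc]
    simp [Nat.cast_sub hn]
  · set u := ζ ^ j * (ζ ^ k)⁻¹
    have hu1 : u ≠ 1 := fun h => hjk (hζ.pow_inj hj hk (by rwa [mul_inv_eq_one₀ hζk] at h))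
    have hun : u ^ n = 1 := by
      rw [mul_pow, inv_pow, pow_right_comm ζ j, pow_right_comm ζ k, hζ.pow_eq_one]
      simp
    have hgeom : ∑ i ∈ range n, u ^ i = 0 := by rw [geom_sum_eq hu1, hun, sub_self, zero_div]
    rw [sum_range_eq_add_Ico _ hn, pow_zero, ← hIcc] at hgeom
    linear_combination hgeom

theorem IsPrimitiveRoot.sum_Icc_one_div_one_sub_mul_one_sub_inv [CharZero K] {ζ : K} {n : ℕ}
    (hζ : IsPrimitiveRoot ζ n) (hn : 0 < n) :
    ∑ i ∈ Icc 1 (n - 1), 1 / ((1 - ζ ^ i) * (1 - (ζ ^ i)⁻¹)) = ((n : K) ^ 2 - 1) / 12 := by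
  have hn0 : (n : K) ≠ 0 := Nat.cast_ne_zero.mpr hn.ne'
  have hterm : ∀ i ∈ Icc 1 (n - 1), 1 / ((1 - ζ ^ i) * (1 - (ζ ^ i)⁻¹)) =
      (∑ j ∈ range n, ∑ k ∈ range n, (j : K) * k * (ζ ^ j * (ζ ^ k)⁻¹) ^ i) / n ^ 2 := by
    intro i hi
    rw [mem_Icc] at hi
    have hwn : (ζ ^ i) ^ n = 1 := by rw [pow_right_comm, hζ.pow_eq_one, one_pow]
    rw [one_div_one_sub_mul_one_sub_inv_eq_sum hn0 hwn
      (hζ.pow_ne_one_of_pos_of_lt (by omega) (by omega))]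
    simp_rw [mul_pow, inv_pow, pow_right_comm ζ i]
  have hortho : ∑ j ∈ range n, ∑ k ∈ range n,
      (j : K) * k * ∑ i ∈ Icc 1 (n - 1), (ζ ^ j * (ζ ^ k)⁻¹) ^ i =
        n * ∑ k ∈ range n, (k : K) ^ 2 - (∑ k ∈ range n, (k : K)) ^ 2 := by
    rw [sum_congr rfl fun j hj => sum_congr rfl fun k hk => by
      rw [hζ.sum_Icc_pow_mul_inv_pow (mem_range.1 hj) (mem_range.1 hk)]]
    simp only [mul_sub, mul_one, mul_ite, mul_zero, sum_sub_distrib, sum_ite_eq, mem_range]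
    rw [sq, sum_mul_sum, mul_sum]
    congr 1
    exact sum_congr rfl fun j hj => by rw [if_pos (mem_range.1 hj)]; ring
  rw [sum_congr rfl hterm, ← sum_div, sum_comm, sum_congr rfl fun j _ => sum_comm]
  simp_rw [← mul_sum]
  rw [hortho]
  have h1 := two_mul_sum_range_natCast (R := K) n
  have h2 := six_mul_sum_range_natCast_sq (R := K) n
  field_simp
  linear_combination 2 * (n : K) * h2 - 3 * (2 * ∑ k ∈ range n, (k : K) + n * (n - 1)) * h1

end Field

theorem stmt_3 (n : ℕ) (hn : 2 ≤ n) (ζ : ℂ) (hζ : IsPrimitiveRoot ζ n) :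
    ∑ i ∈ Finset.Icc 1 (n - 1), 1 / ((1 - ζ ^ i) * (1 - (ζ ^ i)⁻¹)) =
      ((n : ℂ) ^ 2 - 1) / 12 :=
  hζ.sum_Icc_one_div_one_sub_mul_one_sub_inv (by omega)
end

section
/- Let R be a commutative ring, n ≥ 2, and M an n×n matrix over R. For any indices i ≠ k and j ≠ ℓ, the determinant of the 2×2 matrix [[N_{i,j}, N_{i,ℓ}], [N_{k,j}, N_{k,ℓ}]], where N = adj(M) is the adjugate of M, is divisible in R by det(M). -/
/-!
Jacobi's identity for `2 × 2` minors of the adjugate `N = adj M`: if `B` is `M` with rows `j, l`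
replaced by the unit vectors `e_i, e_k`, then `det M * det B = N i j * N k l - N i l * N k j`.
Let `C` be the identity with rows `j, l` replaced by rows `i, k` of `N`, so that `det C` is that
minor. Since `N * M = det M • 1`, the product `C * M` is `M` with rows `j, l` replaced by
`det M • e_i, det M • e_k`, whence `det C * det M = (det M) ^ 2 * det B`. Cancelling `det M` is
legitimate for the generic matrix over `ℤ[X_ab]`, and the identity then specializes to any `M`.
-/

namespace Matrix

variable {n R : Type*} [Fintype n] [DecidableEq n] [CommRing R]

theorem det_one_updateRow_updateRow {j l : n} (hjl : j ≠ l) (x y : n → R) :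
    (((1 : Matrix n n R).updateRow j x).updateRow l y).det = x j * y l - x l * y j := by
  -- Sylvester: `det (1 + U * V) = det (1 + V * U)`, and `V * U` is only `2 × 2`.
  let U : Matrix n (Fin 2) R := of fun m a => Pi.single (M := fun _ => R) (![j, l] a) 1 m
  let V : Matrix (Fin 2) n R := of ![x - Pi.single j 1, y - Pi.single l 1]
  have hUV : ((1 : Matrix n n R).updateRow j x).updateRow l y = 1 + U * V := by
    ext m b
    rcases eq_or_ne m l with rfl | hml
    · simp [U, V, mul_apply, Fin.sum_univ_two, one_eq_pi_single, hjl.symm]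
    rcases eq_or_ne m j with rfl | hmj
    · simp [U, V, mul_apply, Fin.sum_univ_two, one_eq_pi_single, hml]
    · simp [U, V, mul_apply, Fin.sum_univ_two, one_eq_pi_single, Pi.single_apply, hml, hmj]
  have hVU : V * U = of fun a b => V a (![j, l] b) := by
    ext a b
    simp [U, mul_apply, Pi.single_apply]
  rw [hUV, det_one_add_mul_comm, det_fin_two, hVU]
  simp [V, Pi.single_apply, hjl, hjl.symm]

theorem det_mul_det_updateRow_updateRow_single_of_det_ne_zero [IsDomain R] {M : Matrix n n R}
    (hM : M.det ≠ 0) {j l : n} (hjl : j ≠ l) (i k : n) :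
    M.det * ((M.updateRow j (Pi.single i 1)).updateRow l (Pi.single k 1)).det =
      M.adjugate i j * M.adjugate k l - M.adjugate i l * M.adjugate k j := by
  have hrow (a : n) : M.adjugate a ᵥ* M = M.det • Pi.single a 1 := by
    ext b
    rw [← mul_apply_eq_vecMul, adjugate_mul, smul_apply, one_eq_pi_single, Pi.smul_apply]
  have hprod :
      ((1 : Matrix n n R).updateRow j (M.adjugate i)).updateRow l (M.adjugate k) * M =
        (M.updateRow j (M.det • Pi.single i 1)).updateRow l (M.det • Pi.single k 1) := by
    rw [updateRow_mul, updateRow_mul, Matrix.one_mul, hrow, hrow]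
  have hdet := congrArg det hprod
  rw [det_mul, det_one_updateRow_updateRow hjl, det_updateRow_smul, updateRow_comm _ hjl,
    det_updateRow_smul, updateRow_comm _ hjl.symm] at hdet
  refine mul_left_cancel₀ hM ?_
  rw [← hdet]
  ring

theorem det_mul_det_updateRow_updateRow_single (M : Matrix n n R) {j l : n} (hjl : j ≠ l)
    (i k : n) :
    M.det * ((M.updateRow j (Pi.single i 1)).updateRow l (Pi.single k 1)).det =
      M.adjugate i j * M.adjugate k l - M.adjugate i l * M.adjugate k j := by
  let X := mvPolynomialX n n ℤ
  let f := MvPolynomial.aeval (R := ℤ) fun p : n × n => M p.1 p.2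
  have hfX : f.mapMatrix X = M := mvPolynomialX_mapMatrix_aeval ℤ M
  have hadj (a b : n) : f (X.adjugate a b) = M.adjugate a b := by
    rw [← hfX, ← AlgHom.map_adjugate]
    rfl
  have hupdate (A : Matrix n n (MvPolynomial (n × n) ℤ)) (a b : n) :
      f.mapMatrix (A.updateRow a (Pi.single b 1)) =
        (f.mapMatrix A).updateRow a (Pi.single b 1) := by
    ext c d
    simp [updateRow_apply, Pi.single_apply, apply_ite f]
  have hX := congrArg f <|
    det_mul_det_updateRow_updateRow_single_of_det_ne_zero (det_mvPolynomialX_ne_zero n ℤ) hjl i k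
  rwa [map_mul, map_sub, map_mul, map_mul, AlgHom.map_det, AlgHom.map_det, hupdate, hupdate, hfX,
    hadj, hadj, hadj, hadj] at hX

end Matrix

theorem stmt_6_general (R : Type*) [CommRing R] (n : ℕ)
    (M : Matrix (Fin n) (Fin n) R) (i k j l : Fin n) (hjl : j ≠ l) :
    M.det ∣ (M.adjugate i j * M.adjugate k l - M.adjugate i l * M.adjugate k j) :=
  ⟨_, (M.det_mul_det_updateRow_updateRow_single hjl i k).symm⟩

theorem stmt_6 (R : Type*) [CommRing R] (n : ℕ) (hn : 2 ≤ n)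
    (M : Matrix (Fin n) (Fin n) R) (i k j l : Fin n) (hik : i ≠ k) (hjl : j ≠ l) :
    M.det ∣ (M.adjugate i j * M.adjugate k l - M.adjugate i l * M.adjugate k j) :=
  stmt_6_general R n M i k j l hjl
end

section
/- Let n ≥ 2, d ≥ 2 with gcd(n,d) = 1, and let a_1, ..., a_{d−1} ∈ [0, n−1] with a_d = 0. Define S = { (Σ_{j=1}^{d−1} a_j) + n(m − Σ_{j=1}^{d−1} floor((a_j + e)/n)) + d·e : e ∈ [0, n−1], m ≥ 0 }. Then the complement of S in the nonnegative integers has exactly (n−1)(d−1)/2 elements. -/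
/-!
Writing `F e = ∑ j, (a j + e) % n + e`, the set `S` is the union over `e < n` of the
progressions `F e + n ℕ`. Since `F e ≡ ∑ j, a j + d e (mod n)` and `gcd(n, d) = 1`, these lie in
pairwise distinct residue classes, so the gaps of `S` in the class of `F e` are exactly the
`F e / n` numbers below `F e` (Selmer's formula). Summing,
`n ∑ F e / n = ∑ F e - ∑ F e % n = d n(n-1)/2 - n(n-1)/2`.
-/

open Finset

namespace ResidueProgressions

variable {n : ℕ} {F : ℕ → ℕ}

theorem image_mod_range (hF : Set.InjOn (F · % n) (range n)) :
    (range n).image (F · % n) = range n := by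
  refine eq_of_subset_of_card_le (fun r hr => ?_) (card_image_of_injOn hF).ge
  obtain ⟨e, he, rfl⟩ := mem_image.mp hr
  exact mem_range.mpr (Nat.mod_lt _ (pos_of_ne_zero (by rintro rfl; simp at he)))

theorem sum_range_mod (hF : Set.InjOn (F · % n) (range n)) :
    ∑ e ∈ range n, F e % n = ∑ r ∈ range n, r := by
  conv_rhs => rw [← image_mod_range hF]
  exact (sum_image (f := fun r => r) hF).symm

theorem exists_eq_add_mul_iff {x y : ℕ} (h : x % n = y % n) :
    (∃ m, x = y + n * m) ↔ y ≤ x := by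
  refine ⟨fun ⟨m, hm⟩ => hm ▸ Nat.le_add_right y _, fun hyx => ?_⟩
  obtain ⟨m, hm⟩ := (Nat.modEq_iff_dvd' hyx).mp h.symm
  exact ⟨m, by omega⟩

def gaps (n : ℕ) (F : ℕ → ℕ) : Finset ℕ :=
  (range n).biUnion fun e => (range (F e / n)).image (F e % n + n * ·)

theorem mem_gaps (hn : 0 < n) (hF : Set.InjOn (F · % n) (range n)) {x : ℕ} :
    x ∈ gaps n F ↔ ¬ ∃ e < n, ∃ m, x = F e + n * m := by
  simp only [gaps, mem_biUnion, mem_image, mem_range]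
  constructor
  · rintro ⟨e, he, k, hk, rfl⟩ ⟨e', he', m, hm⟩
    have : e' = e := hF (mem_range.mpr he') (mem_range.mpr he) (by
      simpa [Nat.add_mul_mod_self_left] using congr_arg (· % n) hm.symm)
    subst this
    have := Nat.mod_add_div (F e') n
    have : n * k < n * (F e' / n) := Nat.mul_lt_mul_of_pos_left hk hn
    omega
  · intro hx
    obtain ⟨e, he, hre⟩ : ∃ e < n, F e % n = x % n := by
      have : x % n ∈ (range n).image (F · % n) := by
        rw [image_mod_range hF]
        exact mem_range.mpr (Nat.mod_lt _ hn)
      simpa using this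
    have hlt : x < F e := by
      by_contra! hle
      exact hx ⟨e, he, (exists_eq_add_mul_iff hre.symm).mpr hle⟩
    have hx' := Nat.mod_add_div x n
    have hFe := Nat.mod_add_div (F e) n
    exact ⟨e, he, x / n, Nat.lt_of_mul_lt_mul_left (a := n) (by omega), by omega⟩

theorem card_gaps (hF : Set.InjOn (F · % n) (range n)) :
    #(gaps n F) = ∑ e ∈ range n, F e / n := by
  rw [gaps, card_biUnion]
  · refine sum_congr rfl fun e he => ?_
    rw [card_image_of_injective _ fun k k' hkk' => ?_, card_range]
    have hn : 0 < n := pos_of_ne_zero (by rintro rfl; simp at he)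
    exact Nat.eq_of_mul_eq_mul_left hn (Nat.add_left_cancel hkk')
  · intro e he e' he' hne
    refine disjoint_left.mpr fun x hx hx' => hne (hF he he' ?_)
    obtain ⟨k, -, rfl⟩ := mem_image.mp hx
    obtain ⟨k', -, hk'⟩ := mem_image.mp hx'
    simpa [Nat.add_mul_mod_self_left] using congr_arg (· % n) hk'.symm

theorem ncard_not_exists_eq_add_mul (hn : 0 < n) (hF : Set.InjOn (F · % n) (range n)) :
    {x : ℕ | ¬ ∃ e < n, ∃ m, x = F e + n * m}.ncard = ∑ e ∈ range n, F e / n := by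
  rw [← card_gaps hF, ← Set.ncard_coe_finset]
  congr 1
  ext x
  exact (mem_gaps hn hF).symm

end ResidueProgressions

section AperyElement

open ResidueProgressions

variable {ι : Type*} [Fintype ι] {n : ℕ}

/-- `aperyElement n a e` is the least element of `S` in the residue class of `∑ i, a i + d * e`
modulo `n`, where `d = Fintype.card ι + 1`. -/
def aperyElement (n : ℕ) (a : ι → ℕ) (e : ℕ) : ℕ := ∑ i, (a i + e) % n + e

theorem aperyElement_modEq (a : ι → ℕ) (e : ℕ) :
    aperyElement n a e ≡ ∑ i, a i + (Fintype.card ι + 1) * e [MOD n] := by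
  have hsum : ∑ i, (a i + e) % n ≡ ∑ i, (a i + e) [MOD n] := (sum_nat_mod _ _ _).symm
  calc aperyElement n a e = ∑ i, (a i + e) % n + e := rfl
    _ ≡ ∑ i, (a i + e) + e [MOD n] := hsum.add_right e
    _ = ∑ i, a i + (Fintype.card ι + 1) * e := by
      rw [sum_add_distrib, sum_const, card_univ, smul_eq_mul]
      ring

theorem injOn_aperyElement_mod (a : ι → ℕ) (h : n.Coprime (Fintype.card ι + 1)) :
    Set.InjOn (aperyElement n a · % n) (range n) := by
  intro e he e' he' (hee' : aperyElement n a e ≡ aperyElement n a e' [MOD n])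
  have := (aperyElement_modEq a e).symm.trans (hee'.trans (aperyElement_modEq a e'))
  exact (Nat.ModEq.cancel_left_of_coprime h (.add_left_cancel' _ this)).eq_of_lt_of_lt
    (mem_range.mp he) (mem_range.mp he')

theorem injOn_add_mod (c : ℕ) : Set.InjOn (fun e => (c + e) % n) (range n) :=
  fun _ he _ he' hee' =>
    (Nat.ModEq.add_left_cancel' c hee').eq_of_lt_of_lt (mem_range.mp he) (mem_range.mp he')

theorem sum_range_aperyElement (a : ι → ℕ) :
    ∑ e ∈ range n, aperyElement n a e = (Fintype.card ι + 1) * ∑ e ∈ range n, e := by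
  simp only [aperyElement, sum_add_distrib]
  rw [sum_comm, sum_congr rfl fun i _ => sum_range_mod (injOn_add_mod (a i))]
  simp only [sum_const, card_univ, smul_eq_mul]
  ring

theorem two_mul_sum_aperyElement_div (hn : 0 < n) (a : ι → ℕ)
    (h : n.Coprime (Fintype.card ι + 1)) :
    2 * ∑ e ∈ range n, aperyElement n a e / n = (n - 1) * Fintype.card ι := by
  have hdiv : n * ∑ e ∈ range n, aperyElement n a e / n + ∑ e ∈ range n, e =
      (Fintype.card ι + 1) * ∑ e ∈ range n, e := by
    rw [← sum_range_aperyElement, ← sum_range_mod (injOn_aperyElement_mod a h), mul_sum,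
      ← sum_add_distrib]
    exact sum_congr rfl fun e _ => Nat.div_add_mod _ _
  have hgauss := sum_range_id_mul_two n
  refine Nat.eq_of_mul_eq_mul_left hn ?_
  nlinarith

theorem intCast_aperyElement_add_mul (a : ι → ℕ) (e m : ℕ) :
    (∑ i, (a i : ℤ)) + n * ((m : ℤ) - ∑ i, ((a i + e : ℤ) / n)) + (Fintype.card ι + 1) * e =
      ((aperyElement n a e + n * m : ℕ) : ℤ) := by
  have hdiv : ∑ i, ((a i + e : ℤ) % n) + n * ∑ i, ((a i + e : ℤ) / n) =
      ∑ i, (a i : ℤ) + Fintype.card ι * e := by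
    rw [mul_sum, ← sum_add_distrib]
    simp [Int.emod_add_mul_ediv, sum_add_distrib]
  push_cast [aperyElement, Int.natCast_mod]
  linear_combination -hdiv

theorem setOf_nonneg_notMem_eq_image_natCast (a : ι → ℕ) :
    {x : ℤ | 0 ≤ x ∧ x ∉
      {y : ℤ | ∃ e : ℕ, e < n ∧ ∃ m : ℕ,
        y = (∑ i, (a i : ℤ)) + n * ((m : ℤ) - ∑ i, ((a i + e : ℤ) / n)) +
          (Fintype.card ι + 1) * e}} =
      Nat.cast '' {x : ℕ | ¬ ∃ e < n, ∃ m, x = aperyElement n a e + n * m} := by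
  ext x
  simp only [Set.mem_ofPred_eq, intCast_aperyElement_add_mul, Set.mem_image]
  constructor
  · rintro ⟨hx, hxS⟩
    lift x to ℕ using hx
    exact ⟨x, by exact_mod_cast hxS, rfl⟩
  · rintro ⟨x, hxS, rfl⟩
    exact ⟨x.cast_nonneg, by exact_mod_cast hxS⟩

end AperyElement

open ResidueProgressions in
theorem stmt_9_general (n d : ℕ) (hn : 2 ≤ n) (hd : 2 ≤ d) (h : Nat.Coprime n d)
    (a : Fin (d - 1) → ℕ) :
    {x : ℤ | 0 ≤ x ∧ x ∉
      {y : ℤ | ∃ e : ℕ, e < n ∧ ∃ m : ℕ,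
        y = (∑ j, (a j : ℤ)) + n * ((m : ℤ) - ∑ j, ((a j + e : ℤ) / n)) + d * e}}.ncard
      = (n - 1) * (d - 1) / 2 := by
  have hcard : Fintype.card (Fin (d - 1)) + 1 = d := by simp only [Fintype.card_fin]; omega
  have hn0 : 0 < n := by omega
  have hcop : n.Coprime (Fintype.card (Fin (d - 1)) + 1) := by rwa [hcard]
  rw [show (d : ℤ) = Fintype.card (Fin (d - 1)) + 1 by exact_mod_cast hcard.symm,
    setOf_nonneg_notMem_eq_image_natCast, Set.ncard_image_of_injective _ Nat.cast_injective,
    ncard_not_exists_eq_add_mul hn0 (injOn_aperyElement_mod a hcop)]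
  have hsum := two_mul_sum_aperyElement_div hn0 a hcop
  simp only [Fintype.card_fin] at hsum
  omega

theorem stmt_9 (n d : ℕ) (hn : 2 ≤ n) (hd : 2 ≤ d) (h : Nat.Coprime n d)
    (a : Fin (d - 1) → ℕ) (ha : ∀ j, a j ≤ n - 1) :
    {x : ℤ | 0 ≤ x ∧ x ∉
      {y : ℤ | ∃ e : ℕ, e < n ∧ ∃ m : ℕ,
        y = (∑ j, (a j : ℤ)) + n * ((m : ℤ) - ∑ j, ((a j + e : ℤ) / n)) + d * e}}.ncard
      = (n - 1) * (d - 1) / 2 :=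
  stmt_9_general n d hn hd h a
end

section
/- Let n, d ≥ 2 be coprime integers, g = (n−1)(d−1)/2, and let c_i be the coefficient of T^i in (1 + T + ··· + T^{n−1})^{d−1}. Then Σ_{i=0}^{2g} binom(2g−i, 2)·c_i = (g²/2 + g(n−5)/12)·n^{d−1}. -/
/-!
Write `binom(2g - i, 2)` as a quadratic polynomial in `i`. Then for `P = Q ^ (d - 1)` with
`Q = 1 + T + ⋯ + T^(n-1)` the sum is a combination of `P(1)`, `P'(1)` and `P''(1)`, which the
chain rule expresses through `Q(1) = n`, `Q'(1) = n(n-1)/2` and `Q''(1) = n(n-1)(n-2)/3`.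
Substituting `2g = (n - 1)(d - 1)` gives the closed form.
-/

open Polynomial Finset

theorem Nat.sum_range_choose_eq_choose_succ (n k : ℕ) :
    ∑ i ∈ range n, i.choose k = n.choose (k + 1) := by
  induction n with
  | zero => simp
  | succ n ih => rw [sum_range_succ, ih, Nat.choose_succ_succ', add_comm]

theorem Nat.cast_descFactorial_three {R : Type*} [CommRing R] (n : ℕ) :
    (n.descFactorial 3 : R) = n * (n - 1) * (n - 2) := by
  rcases n with _ | _ | n
  · simp
  · simp
  · simp [Nat.descFactorial_succ]
    ring

namespace Polynomial

variable {R : Type*}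

theorem sum_descFactorial_mul_coeff_eq_eval_one [CommSemiring R] (p : R[X]) (k : ℕ) {N : ℕ}
    (hp : p.natDegree ≤ N) :
    ∑ i ∈ range (N + 1), (i.descFactorial k : R) * p.coeff i = (derivative^[k] p).eval 1 := by
  conv_rhs => rw [p.as_sum_range_C_mul_X_pow' (Nat.lt_succ_of_le hp)]
  simp only [iterate_derivative_sum, iterate_derivative_C_mul, iterate_derivative_X_pow_eq_C_mul,
    eval_finsetSum, eval_mul, eval_C, eval_pow, eval_X, one_pow, mul_one]
  exact sum_congr rfl fun i _ => mul_comm _ _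

theorem natDegree_geom_sum_le [Semiring R] (n : ℕ) :
    (∑ i ∈ range n, (X : R[X]) ^ i).natDegree ≤ n - 1 :=
  natDegree_sum_le_of_forall_le _ _ fun i hi =>
    (natDegree_X_pow_le i).trans (Nat.le_sub_one_of_lt (mem_range.mp hi))

theorem succ_mul_eval_one_iterate_derivative_geom_sum [CommSemiring R] (n k : ℕ) :
    (k + 1) * (derivative^[k] (∑ i ∈ range n, (X : R[X]) ^ i)).eval 1 =
      n.descFactorial (k + 1) := by
  simp only [iterate_derivative_sum, iterate_derivative_X_pow_eq_C_mul, eval_finsetSum, eval_mul,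
    eval_C, eval_pow, eval_X, one_pow, mul_one, Nat.descFactorial_eq_factorial_mul_choose]
  rw [← Nat.sum_range_choose_eq_choose_succ, Nat.factorial_succ]
  push_cast
  simp only [mul_sum, mul_assoc]

theorem eval_one_derivative_geom_sum {K : Type*} [Field K] [CharZero K] (n : ℕ) :
    (derivative (∑ i ∈ range n, (X : K[X]) ^ i)).eval 1 = n * (n - 1) / 2 := by
  have h := succ_mul_eval_one_iterate_derivative_geom_sum (R := K) n 1
  rw [Function.iterate_one, Nat.cast_descFactorial_two] at h
  linear_combination h / 2

theorem eval_one_derivative_derivative_geom_sum {K : Type*} [Field K] [CharZero K] (n : ℕ) :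
    (derivative (derivative (∑ i ∈ range n, (X : K[X]) ^ i))).eval 1 =
      n * (n - 1) * (n - 2) / 3 := by
  have h := succ_mul_eval_one_iterate_derivative_geom_sum (R := K) n 2
  rw [Function.iterate_succ_apply', Function.iterate_one, Nat.cast_descFactorial_three] at h
  linear_combination h / 3

variable [CommRing R]

theorem two_mul_sum_choose_sub_mul_coeff (p : R[X]) {N : ℕ} (hp : p.natDegree ≤ N) :
    2 * ∑ i ∈ range (N + 1), ((N - i).choose 2 : R) * p.coeff i =
      (derivative (derivative p)).eval 1 - 2 * (N - 1) * (derivative p).eval 1 +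
        N * (N - 1) * p.eval 1 := by
  have h2 := sum_descFactorial_mul_coeff_eq_eval_one p 2 hp
  have h1 := sum_descFactorial_mul_coeff_eq_eval_one p 1 hp
  have h0 := sum_descFactorial_mul_coeff_eq_eval_one p 0 hp
  simp only [Function.iterate_succ_apply', Function.iterate_zero_apply] at h2 h1 h0
  rw [← h2, ← h1, ← h0, mul_sum, mul_sum, mul_sum, ← sum_sub_distrib, ← sum_add_distrib]
  refine sum_congr rfl fun i hi => ?_
  obtain ⟨j, rfl⟩ : ∃ j, N = i + j := ⟨N - i, by grind⟩
  have hj : (2 * j.choose 2 : R) = j.descFactorial 2 := by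
    rw [Nat.descFactorial_eq_factorial_mul_choose]; push_cast; rfl
  rw [Nat.add_sub_cancel_left, ← mul_assoc, hj]
  simp only [Nat.cast_descFactorial_two, Nat.descFactorial_one, Nat.descFactorial_zero]
  push_cast
  ring

theorem eval_derivative_pow_mul_eval (q : R[X]) (m : ℕ) (x : R) :
    (derivative (q ^ m)).eval x * q.eval x = m * q.eval x ^ m * (derivative q).eval x := by
  rcases m with _ | m
  · simp
  · simp only [derivative_pow_succ, eval_mul, eval_C, eval_pow]
    push_cast
    ring

theorem eval_derivative_derivative_pow_mul_eval_sq (q : R[X]) (m : ℕ) (x : R) :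
    (derivative (derivative (q ^ m))).eval x * q.eval x ^ 2 =
      m * (m - 1) * q.eval x ^ m * (derivative q).eval x ^ 2 +
        m * q.eval x ^ (m + 1) * (derivative (derivative q)).eval x := by
  rcases m with _ | _ | m
  · simp
  · simp
    ring
  · simp only [derivative_pow_succ, derivative_mul, derivative_C, eval_mul, eval_add, eval_C,
      eval_pow, zero_mul, zero_add]
    push_cast
    ring

end Polynomial

open Polynomial in
theorem stmt_11_general (n d g : ℕ) (hn : 2 ≤ n)
    (hg : 2 * g = (n - 1) * (d - 1))
    (c : ℕ → ℤ) (hc : ∀ i, c i = ((∑ i ∈ Finset.range n, (X : ℤ[X]) ^ i) ^ (d - 1)).coeff i) :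
    ∑ i ∈ Finset.range (2 * g + 1), ((2 * g - i).choose 2 : ℚ) * (c i : ℚ) =
      ((g : ℚ) ^ 2 / 2 + (g : ℚ) * ((n : ℚ) - 5) / 12) * (n : ℚ) ^ (d - 1) := by
  set m := d - 1
  set Q : ℚ[X] := ∑ i ∈ range n, X ^ i with hQ
  have hcoeff : ∀ i, (c i : ℚ) = (Q ^ m).coeff i := fun i => by
    rw [hc, ← eq_intCast (Int.castRingHom ℚ), ← coeff_map]
    simp [hQ, Polynomial.map_sum]
  have hdeg : (Q ^ m).natDegree ≤ 2 * g := natDegree_pow_le.trans <| by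
    rw [hg, mul_comm (n - 1)]
    exact Nat.mul_le_mul_left m (natDegree_geom_sum_le n)
  have hg' : (g : ℚ) = (n - 1) * m / 2 := by
    have := congrArg (Nat.cast (R := ℚ)) hg
    push_cast [Nat.cast_sub (by omega : 1 ≤ n)] at this
    linear_combination this / 2
  have hQ0 : Q.eval 1 = n := by simp [hQ, eval_finsetSum]
  have hS := two_mul_sum_choose_sub_mul_coeff (Q ^ m) hdeg
  have h1 := eval_derivative_pow_mul_eval Q m 1
  have h2 := eval_derivative_derivative_pow_mul_eval_sq Q m 1
  simp only [eval_pow, hQ0] at hS h1 h2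
  simp only [hQ, eval_one_derivative_geom_sum, eval_one_derivative_derivative_geom_sum] at h1 h2
  push_cast at hS
  simp_rw [hcoeff, hg'] at hS ⊢
  -- `h1` and `h2` only determine `P'(1)` and `P''(1)` after division by `n` and `n²`.
  refine mul_left_cancel₀ (pow_ne_zero 2 (Nat.cast_ne_zero.mpr (by omega : n ≠ 0))) ?_
  linear_combination ((n : ℚ) ^ 2 / 2) * hS + h2 / 2 - ((n - 1) * m - 1) * n * h1

open Polynomial in
theorem stmt_11 (n d g : ℕ) (hn : 2 ≤ n) (hd : 2 ≤ d) (h : Nat.Coprime n d)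
    (hg : 2 * g = (n - 1) * (d - 1))
    (c : ℕ → ℤ) (hc : ∀ i, c i = ((∑ i ∈ Finset.range n, (X : ℤ[X]) ^ i) ^ (d - 1)).coeff i) :
    ∑ i ∈ Finset.range (2 * g + 1), ((2 * g - i).choose 2 : ℚ) * (c i : ℚ) =
      ((g : ℚ) ^ 2 / 2 + (g : ℚ) * ((n : ℚ) - 5) / 12) * (n : ℚ) ^ (d - 1) :=
  stmt_11_general n d g hn hg c hc
end

section
/- Let K be a field, n ≥ 2, d ≥ 2 with the characteristic of K not dividing n, and suppose K contains a primitive n-th root of unity ζ. Let r_1, ..., r_d ∈ K and let s_j denote the j-th elementary symmetric polynomial in r_1, ..., r_d (with s_m = 0 for m outside [0,d]). Working in L = K[T], define for 1 ≤ k ≤ n the polynomial λ_k = Π_{i=1}^d (r_i + ζ^k T), and define the n×n matrix A over K[T^n] whose (i,j)-entry is A_{d+i−j} where A_ℓ(x) = Σ_{k≥0} (−1)^{(n−1)k} s_{ℓ−nk} x^k evaluated at x = −(−T)^n. Then for each k, the vector v_k = (1, ζ^k T, ζ^{2k}T², ..., ζ^{(n−1)k} T^{n−1})ᵀ satisfies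 A·v_k = λ_k·v_k. -/
open Polynomial

/-- The `j`-th elementary symmetric polynomial of `r 0, ..., r (d-1)`, with the
convention that it is `0` for `j` outside `[0, d]`. -/
noncomputable def esymZ {K : Type*} [CommRing K] {d : ℕ} (r : Fin d → K) (j : ℤ) : K :=
  if 0 ≤ j then ∑ t ∈ Finset.univ.powersetCard j.toNat, ∏ i ∈ t, r i else 0

/-- `A_ℓ(x) = Σ_{k ≥ 0} (−1)^{(n−1)k} s_{ℓ−nk} x^k`, a finite sum since `s_m = 0`
for `m < 0`. -/
noncomputable def Apoly {K : Type*} [CommRing K] {d : ℕ} (n : ℕ) (r : Fin d → K) (ℓ : ℤ) :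
    K[X] :=
  ∑ k ∈ Finset.range (ℓ.toNat / n + 1),
    ((-1 : K[X]) ^ ((n - 1) * k)) * C (esymZ r (ℓ - n * k)) * X ^ k

/-!
Write `y = ζ^k T`. Since `(ζ^k)^n = 1`, each entry of `A` is a polynomial in `T^n = y^n`, and
`v_k = (y^j)_j`, `λ_k = ∏ (r_m + y)`. So the substitution `T ↦ ζ^k T` reduces the claim to the
case `ζ^k = 1`, i.e. `∑_j A_{ij} T^j = T^i ∏ (r_m + T)`. That identity is checked on
coefficients: the entry `A_{ij}` only contributes to exponents `≡ j (mod n)`, and the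
coefficient of `T^t` on both sides is `s_{d+i-t}`.
-/

lemma coeff_sum_expand_mul_X_pow {R : Type*} [CommSemiring R] {n : ℕ} (hn : 0 < n)
    (g : Fin n → R[X]) (t : ℕ) :
    (∑ j : Fin n, expand R n (g j) * X ^ (j : ℕ)).coeff t =
      (g ⟨t % n, Nat.mod_lt t hn⟩).coeff (t / n) := by
  have hdiv : ∀ j : Fin n, j.1 ≤ t ∧ n ∣ t - j ↔ ⟨t % n, Nat.mod_lt t hn⟩ = j := by
    intro j
    rw [Fin.ext_iff]
    change _ ↔ t % n = j.1
    constructor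
    · rintro ⟨hle, hdvd⟩
      rw [← (Nat.modEq_iff_dvd' hle).mpr hdvd, Nat.mod_eq_of_lt j.2]
    · rintro h
      rw [← h]
      exact ⟨Nat.mod_le t n, Nat.dvd_sub_mod t⟩
  simp only [finsetSum_coeff, coeff_mul_X_pow', coeff_expand hn, ← ite_and, hdiv]
  rw [Finset.sum_ite_eq Finset.univ, if_pos (Finset.mem_univ _), ← Nat.div_eq_sub_mod_div]

lemma expand_comp_C_mul_X {R : Type*} [CommSemiring R] {n : ℕ} {c : R} (hc : c ^ n = 1)
    (p : R[X]) : (expand R n p).comp (C c * X) = expand R n p := by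
  rw [expand_eq_comp_X_pow, comp_assoc, X_pow_comp, mul_pow, ← C_pow, hc, C_1, one_mul]

section
variable {R : Type*} [CommRing R] {d : ℕ} (r : Fin d → R)

lemma esymZ_of_neg {j : ℤ} (h : j < 0) : esymZ r j = 0 := by
  rw [esymZ, if_neg h.not_ge]

lemma esymZ_of_lt {j : ℤ} (h : (d : ℤ) < j) : esymZ r j = 0 := by
  rw [esymZ, if_pos (by omega), Finset.powersetCard_eq_empty.mpr
    (by simp only [Finset.card_univ, Fintype.card_fin]; omega), Finset.sum_empty]

lemma coeff_prod_C_add_X (t : ℕ) : (∏ m, (C (r m) + X)).coeff t = esymZ r (d - t) := by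
  obtain ht | ht := le_or_gt t d
  · simp_rw [add_comm (C _) X]
    rw [Finset.prod_X_add_C_coeff _ _ (by simpa using ht), esymZ, if_pos (by omega)]
    simp only [Finset.card_univ, Fintype.card_fin]
    congr
    omega
  · rw [esymZ_of_neg r (by omega), coeff_eq_zero_of_natDegree_lt]
    calc (∏ m, (C (r m) + X)).natDegree ≤ ∑ _m : Fin d, 1 :=
          (natDegree_prod_le _ _).trans (Finset.sum_le_sum fun m _ => by compute_degree)
      _ < t := by simpa using ht

lemma coeff_X_pow_mul_prod_C_add_X (i t : ℕ) :
    (X ^ i * ∏ m, (C (r m) + X)).coeff t = esymZ r (d + i - t) := by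
  rw [coeff_X_pow_mul']
  split_ifs with h
  · rw [coeff_prod_C_add_X]; congr 1; push_cast [h]; ring
  · rw [esymZ_of_lt r (by omega)]

variable {n : ℕ} (hn : 0 < n)
include hn

lemma coeff_Apoly (ℓ : ℤ) (m : ℕ) :
    (Apoly n r ℓ).coeff m = (-1) ^ ((n - 1) * m) * esymZ r (ℓ - n * m) := by
  have hsign : ∀ a : ℕ, (-1 : R[X]) ^ a = C ((-1) ^ a) := fun a => by simp
  simp only [Apoly, finsetSum_coeff, hsign, ← C_mul, coeff_C_mul_X_pow]
  rw [Finset.sum_ite_eq]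
  split_ifs with hm
  · rfl
  · rw [esymZ_of_neg r, mul_zero]
    have h1 := Nat.lt_mul_div_succ ℓ.toNat hn
    have h2 : ℓ.toNat / n + 1 ≤ m := by simpa using hm
    have h3 : n * (ℓ.toNat / n + 1) ≤ n * m := Nat.mul_le_mul_left n h2
    have h4 := Int.self_le_toNat ℓ
    omega

lemma Apoly_comp_neg_neg_X_pow (ℓ : ℤ) :
    (Apoly n r ℓ).comp (-(-X) ^ n) =
      expand R n ((Apoly n r ℓ).comp (C ((-1) ^ (n - 1)) * X)) := by
  obtain ⟨m, rfl⟩ : ∃ m, n = m + 1 := ⟨n - 1, by omega⟩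
  rw [expand_eq_comp_X_pow, comp_assoc, mul_comp, C_comp, X_comp, neg_pow, C_pow, C_neg, C_1,
    Nat.add_sub_cancel]
  congr 1
  ring

lemma coeff_Apoly_comp_neg_one_pow_mul_X (ℓ : ℤ) (m : ℕ) :
    ((Apoly n r ℓ).comp (C ((-1) ^ (n - 1)) * X)).coeff m = esymZ r (ℓ - n * m) := by
  have hsign : (-1 : R) ^ ((n - 1) * m) * ((-1) ^ (n - 1)) ^ m = 1 := by
    rw [← pow_mul, ← pow_add, ← two_mul, pow_mul, neg_one_sq, one_pow]
  rw [comp_C_mul_X_coeff, coeff_Apoly r hn]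
  linear_combination esymZ r (ℓ - n * m) * hsign

lemma Apoly_comp_neg_neg_X_pow_comp_C_mul_X {c : R} (hc : c ^ n = 1) (ℓ : ℤ) :
    ((Apoly n r ℓ).comp (-(-X) ^ n)).comp (C c * X) = (Apoly n r ℓ).comp (-(-X) ^ n) := by
  rw [Apoly_comp_neg_neg_X_pow r hn, expand_comp_C_mul_X hc]

omit hn in
lemma sum_Apoly_comp_mul_X_pow (i : Fin n) :
    ∑ j : Fin n, (Apoly n r (d + i - j)).comp (-(-X) ^ n) * X ^ (j : ℕ) =
      X ^ (i : ℕ) * ∏ m, (C (r m) + X) := by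
  have hn := i.pos
  ext t
  simp only [Apoly_comp_neg_neg_X_pow r hn]
  rw [coeff_sum_expand_mul_X_pow hn, coeff_Apoly_comp_neg_one_pow_mul_X r hn,
    coeff_X_pow_mul_prod_C_add_X]
  have h : (n : ℤ) * (t / n : ℕ) + (t % n : ℕ) = t := by exact_mod_cast Nat.div_add_mod t n
  congr 1
  linarith

end

theorem stmt_14_general (K : Type*) [Field K] (n d : ℕ) (ζ : K) (hζ : IsPrimitiveRoot ζ n)
    (r : Fin d → K) (A : Matrix (Fin n) (Fin n) K[X])
    (hA : ∀ i j : Fin n, A i j = (Apoly n r ((d : ℤ) + i.1 - j.1)).comp (-(-X) ^ n))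
    (k : ℕ) (v : Fin n → K[X]) (hv : ∀ i : Fin n, v i = C (ζ ^ (k * i.1)) * X ^ i.1)
    (lam : K[X]) (hlam : lam = ∏ i : Fin d, (C (r i) + C (ζ ^ k) * X)) :
    A.mulVec v = lam • v := by
  funext i
  have hc : (ζ ^ k) ^ n = 1 := by rw [← pow_mul, mul_comm, pow_mul, hζ.pow_eq_one, one_pow]
  have hv' : ∀ j : Fin n, v j = (C (ζ ^ k) * X) ^ (j : ℕ) := fun j => by
    rw [hv, mul_pow, ← C_pow, ← pow_mul]
  have key := congrArg (fun p => p.comp (C (ζ ^ k) * X)) (sum_Apoly_comp_mul_X_pow r i)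
  simp only [Polynomial.sum_comp, mul_comp, X_pow_comp, prod_comp, add_comp, C_comp, X_comp,
    Apoly_comp_neg_neg_X_pow_comp_C_mul_X r i.pos hc] at key
  simp only [Matrix.mulVec, dotProduct, Pi.smul_apply, smul_eq_mul, hA, hv', hlam]
  rw [key, mul_comm]

theorem stmt_14 (K : Type*) [Field K] (n d : ℕ) (hn : 2 ≤ n) (hd : 2 ≤ d)
    (hchar : (n : K) ≠ 0) (ζ : K) (hζ : IsPrimitiveRoot ζ n) (r : Fin d → K)
    (A : Matrix (Fin n) (Fin n) K[X])
    (hA : ∀ i j : Fin n, A i j = (Apoly n r ((d : ℤ) + i.1 - j.1)).comp (-(-X) ^ n))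
    (k : ℕ) (hk1 : 1 ≤ k) (hk2 : k ≤ n)
    (v : Fin n → K[X]) (hv : ∀ i : Fin n, v i = C (ζ ^ (k * i.1)) * X ^ i.1)
    (lam : K[X]) (hlam : lam = ∏ i : Fin d, (C (r i) + C (ζ ^ k) * X)) :
    A.mulVec v = lam • v :=
  stmt_14_general K n d ζ hζ r A hA k v hv lam hlam
end
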